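/- Let H ∈ ℂ^{n×n} be Hermitian, let P_* ∈ ℂ^{n×k} have orthonormal columns spanning an invariant subspace of H, and let P ∈ ℂ^{n×k} have orthonormal columns. Then ‖HP − P(Pᴴ H P)‖_F ≤ (λ_1(H) − λ_n(H)) · ‖sin Θ(R(P), R(P_*))‖_F, where λ_1(H) and λ_n(H) are the largest and smallest eigenvalues of H and Θ(R(P), R(P_*)) is the diagonal matrix of canonical angles between the column spaces of P and P_*. -/

import Mathlib

open scoped ComplexOrder
open Matrix

/-- The tuple `f` rearranged into decreasing order; `sortedDesc f 0` is the largest entry. -/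
noncomputable def sortedDesc {m : ℕ} (f : Fin m → ℝ) : Fin m → ℝ :=
  fun i => (f ∘ Tuple.sort f) i.rev

/-- The singular values of a complex matrix, in decreasing order. -/
noncomputable def sv {n k : ℕ} (B : Matrix (Fin n) (Fin k) ℂ) : Fin k → ℝ :=
  sortedDesc fun i =>
    Real.sqrt ((Matrix.posSemidef_conjTranspose_mul_self B).isHermitian.eigenvalues i)

/-- The trace (nuclear) norm: the sum of the singular values. -/
noncomputable def trNorm {n k : ℕ} (B : Matrix (Fin n) (Fin k) ℂ) : ℝ := ∑ i, sv B i

/-- The Frobenius norm. -/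
noncomputable def frobNorm {n k : ℕ} (A : Matrix (Fin n) (Fin k) ℂ) : ℝ :=
  Real.sqrt (∑ i, ∑ j, ‖A i j‖ ^ 2)

/-- `‖sin Θ(R(X), R(Y))‖_F` where `Θ` is the diagonal matrix of canonical angles
`θ_i = arccos σ_i(Xᴴ Y)` between the column spaces of `X` and `Y`. -/
noncomputable def sinThetaF {n k : ℕ} (X Y : Matrix (Fin n) (Fin k) ℂ) : ℝ :=
  Real.sqrt (∑ i, Real.sin (Real.arccos (sv (Xᴴ * Y) i)) ^ 2)

/-- The smallest singular value. -/
noncomputable def smin {n k : ℕ} (B : Matrix (Fin n) (Fin k) ℂ) : ℝ := ⨅ i, sv B i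

/-- The spectral norm (largest singular value). -/
noncomputable def s2norm {n k : ℕ} (B : Matrix (Fin n) (Fin k) ℂ) : ℝ := ⨆ i, sv B i

/-- The old `Matrix.PosSemidef.sqrt` (removed from Mathlib), with its old definition. -/
noncomputable def psdSqrt {k : ℕ} {A : Matrix (Fin k) (Fin k) ℂ} (hA : A.PosSemidef) :
    Matrix (Fin k) (Fin k) ℂ :=
  hA.1.eigenvectorUnitary.1 * diagonal ((↑) ∘ Real.sqrt ∘ hA.1.eigenvalues) *
    (star hA.1.eigenvectorUnitary : Matrix (Fin k) (Fin k) ℂ)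

/-- The orthonormal polar factor `B (Bᴴ B)^{-1/2}` (for `B` of full column rank). -/
noncomputable def polarFactor {n k : ℕ} (B : Matrix (Fin n) (Fin k) ℂ) :
    Matrix (Fin n) (Fin k) ℂ :=
  B * (psdSqrt (Matrix.posSemidef_conjTranspose_mul_self B))⁻¹

/-- Eigenvalues of a Hermitian matrix, in decreasing order. -/
noncomputable def eigsDesc {n : ℕ} {H : Matrix (Fin n) (Fin n) ℂ} (hH : H.IsHermitian) :
    Fin n → ℝ :=
  sortedDesc hH.eigenvalues

/-! Shift `H` to `G = H - μ • 1` with `μ` the midpoint of its spectrum, so that `‖G‖₂ ≤ d`, half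
the spread. Because `P` is orthonormal, the residual is `(1 - P Pᴴ) G P`. The projector
`Q = P⋆ P⋆ᴴ` commutes with `G`, and splitting `P = Q P + (1 - Q) P` writes the residual as
`(1 - P Pᴴ) Q · G P + (1 - P Pᴴ) G · (1 - Q) P`. Both `‖(1 - P Pᴴ) Q‖_F` and `‖(1 - Q) P‖_F` equal
`‖sin Θ‖_F`, and the other factors have spectral norm at most `d`. -/
open scoped MatrixOrder

section Spectral

variable {𝕜 : Type*} [RCLike 𝕜] {n : Type*} [Fintype n] [DecidableEq n]

lemma Matrix.IsHermitian.sub_smul_one_mul_self_le {H : Matrix n n 𝕜} (hH : H.IsHermitian)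
    {lo hi : ℝ} (hlo : ∀ i, lo ≤ hH.eigenvalues i) (hhi : ∀ i, hH.eigenvalues i ≤ hi) :
    (H - ((hi + lo) / 2) • 1) * (H - ((hi + lo) / 2) • 1) ≤ ((hi - lo) / 2) ^ 2 • 1 := by
  have hcfc : cfc (fun x : ℝ => (x - (hi + lo) / 2) ^ 2) H
      = (H - ((hi + lo) / 2) • 1) * (H - ((hi + lo) / 2) • 1) := by
    rw [cfc_pow .., cfc_sub .., cfc_const .., cfc_id' ℝ H, sq, Algebra.algebraMap_eq_smul_one]
  rw [← hcfc, ← Algebra.algebraMap_eq_smul_one]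
  refine cfc_le_algebraMap _ _ _ fun x hx => ?_
  obtain ⟨i, rfl⟩ := hH.spectrum_real_eq_range_eigenvalues ▸ hx
  nlinarith [hlo i, hhi i]

lemma Matrix.IsHermitian.eigenvalues_le_one {A : Matrix n n 𝕜} (hA : A.IsHermitian) (h : A ≤ 1)
    (i : n) : hA.eigenvalues i ≤ 1 := by
  rw [← map_one (algebraMap ℝ (Matrix n n 𝕜)), le_algebraMap_iff_spectrum_le hA.isSelfAdjoint] at h
  exact h _ (hA.eigenvalues_mem_spectrum_real i)

end Spectral

section Projection

variable {𝕜 : Type*} [RCLike 𝕜] {m n : Type*} [Fintype m] [Fintype n] [DecidableEq m]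

lemma Matrix.IsHermitian.commute_mul_conjTranspose_of_mul_eq {H : Matrix n n 𝕜}
    (hH : H.IsHermitian) {X : Matrix n m 𝕜} (hX : Xᴴ * X = 1) {M : Matrix m m 𝕜}
    (hM : H * X = X * M) : Commute H (X * Xᴴ) := by
  have hMh : Mᴴ = M := by
    have hM' : M = Xᴴ * H * X := by
      rw [Matrix.mul_assoc, hM, ← Matrix.mul_assoc, hX, Matrix.one_mul]
    rw [hM', conjTranspose_mul, conjTranspose_mul, conjTranspose_conjTranspose, hH.eq,
      Matrix.mul_assoc]
  calc H * (X * Xᴴ) = X * M * Xᴴ := by rw [← Matrix.mul_assoc, hM]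
    _ = X * (H * X)ᴴ := by rw [hM, conjTranspose_mul, hMh, Matrix.mul_assoc]
    _ = X * Xᴴ * H := by rw [conjTranspose_mul, hH.eq, Matrix.mul_assoc]

variable [DecidableEq n]

lemma Matrix.conjTranspose_mul_self_one_sub_mul_conjTranspose {X : Matrix n m 𝕜}
    (hX : Xᴴ * X = 1) : (1 - X * Xᴴ)ᴴ * (1 - X * Xᴴ) = 1 - X * Xᴴ := by
  have hproj : X * Xᴴ * (X * Xᴴ) = X * Xᴴ := by
    rw [Matrix.mul_assoc, ← Matrix.mul_assoc Xᴴ, hX, Matrix.one_mul]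
  rw [conjTranspose_sub, conjTranspose_one, conjTranspose_mul, conjTranspose_conjTranspose,
    Matrix.sub_mul, Matrix.one_mul, Matrix.mul_sub, Matrix.mul_one, hproj, sub_self, sub_zero]

lemma Matrix.mul_conjTranspose_le_one {X : Matrix n m 𝕜} (hX : Xᴴ * X = 1) : X * Xᴴ ≤ 1 := by
  rw [Matrix.le_iff, ← conjTranspose_mul_self_one_sub_mul_conjTranspose hX]
  exact posSemidef_conjTranspose_mul_self _

lemma Matrix.conjTranspose_mul_self_one_sub_mul_conjTranspose_le_one {X : Matrix n m 𝕜}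
    (hX : Xᴴ * X = 1) : (1 - X * Xᴴ)ᴴ * (1 - X * Xᴴ) ≤ 1 := by
  rw [conjTranspose_mul_self_one_sub_mul_conjTranspose hX, sub_le_self_iff, nonneg_iff_posSemidef]
  exact posSemidef_self_mul_conjTranspose X

lemma Matrix.mul_sub_mul_conjTranspose_mul_mul_eq {H : Matrix n n 𝕜} {P : Matrix n m 𝕜}
    (hP : Pᴴ * P = 1) (μ : ℝ) :
    H * P - P * (Pᴴ * H * P) = (1 - P * Pᴴ) * (H - μ • 1) * P := by
  have hkill : (1 - P * Pᴴ) * P = 0 := by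
    rw [Matrix.sub_mul, Matrix.one_mul, Matrix.mul_assoc, hP, Matrix.mul_one, sub_self]
  rw [Matrix.mul_sub, Matrix.sub_mul, Matrix.mul_smul, Matrix.mul_one, Matrix.smul_mul, hkill,
    smul_zero, sub_zero, Matrix.sub_mul, Matrix.one_mul, Matrix.sub_mul]
  simp only [Matrix.mul_assoc]

end Projection

section Frobenius

variable {l m n : ℕ}

attribute [local instance] Matrix.frobeniusSeminormedAddCommGroup

lemma frobNorm_eq_norm (A : Matrix (Fin m) (Fin n) ℂ) : frobNorm A = ‖A‖ := by
  rw [frobNorm, frobenius_norm_def, ← Real.sqrt_eq_rpow]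
  norm_cast

lemma frobNorm_nonneg (A : Matrix (Fin m) (Fin n) ℂ) : 0 ≤ frobNorm A :=
  Real.sqrt_nonneg _

lemma frobNorm_add_le (A B : Matrix (Fin m) (Fin n) ℂ) :
    frobNorm (A + B) ≤ frobNorm A + frobNorm B := by
  simpa only [frobNorm_eq_norm] using norm_add_le A B

lemma frobNorm_conjTranspose (A : Matrix (Fin m) (Fin n) ℂ) : frobNorm Aᴴ = frobNorm A := by
  simpa only [frobNorm_eq_norm] using frobenius_norm_conjTranspose A

lemma ofReal_frobNorm_sq (A : Matrix (Fin m) (Fin n) ℂ) :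
    (frobNorm A : ℂ) ^ 2 = (Aᴴ * A).trace := by
  rw [← Complex.ofReal_pow, frobNorm, Real.sq_sqrt (by positivity), trace, Finset.sum_comm]
  push_cast
  refine Finset.sum_congr rfl fun j _ => ?_
  simp only [diag, mul_apply, conjTranspose_apply, RCLike.star_def, Complex.conj_mul']

lemma frobNorm_mul_le_of_conjTranspose_mul_self_le {c : ℝ} (hc : 0 ≤ c)
    {A : Matrix (Fin l) (Fin m) ℂ} (hA : Aᴴ * A ≤ c ^ 2 • 1) (B : Matrix (Fin m) (Fin n) ℂ) :
    frobNorm (A * B) ≤ c * frobNorm B := by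
  have hsq : ((frobNorm (A * B) ^ 2 : ℝ) : ℂ) ≤ ((c * frobNorm B) ^ 2 : ℝ) := by
    push_cast
    rw [ofReal_frobNorm_sq, mul_pow, ofReal_frobNorm_sq, ← sub_nonneg]
    convert (Matrix.le_iff.mp hA).conjTranspose_mul_mul_same B |>.trace_nonneg using 1
    rw [Matrix.mul_sub, Matrix.sub_mul, trace_sub, Matrix.mul_smul, Matrix.mul_one,
      Matrix.smul_mul, trace_smul, conjTranspose_mul, Complex.real_smul, Complex.ofReal_pow]
    simp only [Matrix.mul_assoc]
  exact (pow_le_pow_iff_left₀ (frobNorm_nonneg _) (mul_nonneg hc (frobNorm_nonneg _))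
    two_ne_zero).mp (Complex.real_le_real.mp hsq)

lemma frobNorm_mul_le_of_mul_conjTranspose_self_le {c : ℝ} (hc : 0 ≤ c)
    (A : Matrix (Fin l) (Fin m) ℂ) {B : Matrix (Fin m) (Fin n) ℂ} (hB : B * Bᴴ ≤ c ^ 2 • 1) :
    frobNorm (A * B) ≤ frobNorm A * c := by
  rw [← frobNorm_conjTranspose, conjTranspose_mul, mul_comm, ← frobNorm_conjTranspose A]
  exact frobNorm_mul_le_of_conjTranspose_mul_self_le hc (by rwa [conjTranspose_conjTranspose]) _

lemma frobNorm_mul_le_of_orthonormal {X : Matrix (Fin m) (Fin n) ℂ} (hX : Xᴴ * X = 1)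
    (A : Matrix (Fin l) (Fin m) ℂ) : frobNorm (A * X) ≤ frobNorm A := by
  simpa using frobNorm_mul_le_of_mul_conjTranspose_self_le zero_le_one A
    (by simpa using mul_conjTranspose_le_one hX)

lemma frobNorm_one_sub_mul_conjTranspose_mul_le {X : Matrix (Fin m) (Fin l) ℂ} (hX : Xᴴ * X = 1)
    (B : Matrix (Fin m) (Fin n) ℂ) : frobNorm ((1 - X * Xᴴ) * B) ≤ frobNorm B := by
  simpa using frobNorm_mul_le_of_conjTranspose_mul_self_le zero_le_one
    (by simpa using conjTranspose_mul_self_one_sub_mul_conjTranspose_le_one hX) B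

lemma frobNorm_mul_conjTranspose_of_orthonormal {X : Matrix (Fin m) (Fin n) ℂ}
    (hX : Xᴴ * X = 1) (A : Matrix (Fin l) (Fin n) ℂ) : frobNorm (A * Xᴴ) = frobNorm A := by
  rw [← sq_eq_sq₀ (frobNorm_nonneg _) (frobNorm_nonneg _)]
  apply Complex.ofReal_injective
  push_cast
  rw [ofReal_frobNorm_sq, ofReal_frobNorm_sq, conjTranspose_mul, conjTranspose_conjTranspose,
    Matrix.mul_assoc, trace_mul_comm, Matrix.mul_assoc, Matrix.mul_assoc, hX, Matrix.mul_one]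

lemma frobNorm_sq_of_orthonormal {X : Matrix (Fin m) (Fin n) ℂ} (hX : Xᴴ * X = 1) :
    frobNorm X ^ 2 = n := by
  apply Complex.ofReal_injective
  push_cast
  rw [ofReal_frobNorm_sq, hX, trace_one, Fintype.card_fin]

lemma frobNorm_sq_one_sub_mul_conjTranspose_mul {X : Matrix (Fin m) (Fin l) ℂ} (hX : Xᴴ * X = 1)
    (Y : Matrix (Fin m) (Fin n) ℂ) :
    frobNorm ((1 - X * Xᴴ) * Y) ^ 2 = frobNorm Y ^ 2 - frobNorm (Xᴴ * Y) ^ 2 := by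
  apply Complex.ofReal_injective
  push_cast
  rw [ofReal_frobNorm_sq, ofReal_frobNorm_sq, ofReal_frobNorm_sq, conjTranspose_mul,
    Matrix.mul_assoc, ← Matrix.mul_assoc (1 - X * Xᴴ)ᴴ,
    conjTranspose_mul_self_one_sub_mul_conjTranspose hX, conjTranspose_mul,
    conjTranspose_conjTranspose, Matrix.sub_mul, Matrix.mul_sub, trace_sub, Matrix.one_mul]
  simp only [Matrix.mul_assoc]

end Frobenius

section SortedDesc

variable {m : ℕ}

lemma sortedDesc_eq_comp (f : Fin m → ℝ) :
    sortedDesc f = f ∘ Fin.revPerm.trans (Tuple.sort f) :=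
  rfl

lemma sortedDesc_antitone (f : Fin m → ℝ) : Antitone (sortedDesc f) :=
  fun _ _ hij => Tuple.monotone_sort f (Fin.rev_le_rev.mpr hij)

lemma sum_comp_sortedDesc (f : Fin m → ℝ) (g : ℝ → ℝ) :
    ∑ i, g (sortedDesc f i) = ∑ i, g (f i) :=
  Equiv.sum_comp (Fin.revPerm.trans (Tuple.sort f)) (g ∘ f)

lemma le_sortedDesc_zero (hm : 0 < m) (f : Fin m → ℝ) (i : Fin m) :
    f i ≤ sortedDesc f ⟨0, hm⟩ := by
  have hi : sortedDesc f ((Fin.revPerm.trans (Tuple.sort f)).symm i) = f i := by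
    rw [sortedDesc_eq_comp, Function.comp_apply, Equiv.apply_symm_apply]
  exact hi ▸ sortedDesc_antitone f (Fin.le_def.mpr (Nat.zero_le _))

lemma sortedDesc_last_le (hm : 0 < m) (f : Fin m → ℝ) (i : Fin m) :
    sortedDesc f ⟨m - 1, Nat.sub_lt hm Nat.one_pos⟩ ≤ f i := by
  have hi : sortedDesc f ((Fin.revPerm.trans (Tuple.sort f)).symm i) = f i := by
    rw [sortedDesc_eq_comp, Function.comp_apply, Equiv.apply_symm_apply]
  exact hi ▸ sortedDesc_antitone f (Fin.le_def.mpr (Nat.le_sub_one_of_lt (Fin.is_lt _)))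

end SortedDesc

section CanonicalAngles

variable {m n k : ℕ}

lemma frobNorm_sq_eq_sum_eigenvalues (B : Matrix (Fin m) (Fin n) ℂ) :
    frobNorm B ^ 2 = ∑ i, (posSemidef_conjTranspose_mul_self B).isHermitian.eigenvalues i := by
  apply Complex.ofReal_injective
  push_cast
  rw [ofReal_frobNorm_sq,
    (posSemidef_conjTranspose_mul_self B).isHermitian.trace_eq_sum_eigenvalues]
  rfl

lemma sum_sin_arccos_sv_sq {B : Matrix (Fin m) (Fin n) ℂ} (hB : Bᴴ * B ≤ 1) :
    ∑ i, Real.sin (Real.arccos (sv B i)) ^ 2 = n - frobNorm B ^ 2 := by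
  have hN := posSemidef_conjTranspose_mul_self B
  have hterm : ∀ i, Real.sin (Real.arccos √(hN.isHermitian.eigenvalues i)) ^ 2
      = 1 - hN.isHermitian.eigenvalues i := fun i => by
    rw [Real.sin_arccos, Real.sq_sqrt (hN.eigenvalues_nonneg i), Real.sq_sqrt]
    linarith [hN.isHermitian.eigenvalues_le_one hB i]
  rw [sv, sum_comp_sortedDesc _ fun x => Real.sin (Real.arccos x) ^ 2]
  simp only [hterm, Finset.sum_sub_distrib, Finset.sum_const, Finset.card_univ, Fintype.card_fin,
    nsmul_eq_mul, mul_one, frobNorm_sq_eq_sum_eigenvalues]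

lemma sinThetaF_eq {X Y : Matrix (Fin n) (Fin k) ℂ} (hX : Xᴴ * X = 1) (hY : Yᴴ * Y = 1) :
    sinThetaF X Y = √(k - frobNorm (Xᴴ * Y) ^ 2) := by
  have hXY : (Xᴴ * Y)ᴴ * (Xᴴ * Y) ≤ 1 := by
    have hgap := (Matrix.le_iff.mp (mul_conjTranspose_le_one hX)).conjTranspose_mul_mul_same Y
    rw [Matrix.mul_sub, Matrix.sub_mul, Matrix.mul_one, hY, ← Matrix.le_iff] at hgap
    rwa [conjTranspose_mul, conjTranspose_conjTranspose, ← Matrix.mul_assoc, Matrix.mul_assoc Yᴴ]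
  rw [sinThetaF, sum_sin_arccos_sv_sq hXY]

lemma sinThetaF_comm {X Y : Matrix (Fin n) (Fin k) ℂ} (hX : Xᴴ * X = 1) (hY : Yᴴ * Y = 1) :
    sinThetaF X Y = sinThetaF Y X := by
  rw [sinThetaF_eq hX hY, sinThetaF_eq hY hX, ← frobNorm_conjTranspose, conjTranspose_mul,
    conjTranspose_conjTranspose]

lemma frobNorm_one_sub_mul_conjTranspose_mul {X Y : Matrix (Fin n) (Fin k) ℂ}
    (hX : Xᴴ * X = 1) (hY : Yᴴ * Y = 1) :
    frobNorm ((1 - X * Xᴴ) * Y) = sinThetaF X Y := by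
  rw [sinThetaF_eq hX hY, ← frobNorm_sq_of_orthonormal hY,
    ← frobNorm_sq_one_sub_mul_conjTranspose_mul hX, Real.sqrt_sq (frobNorm_nonneg _)]

lemma frobNorm_one_sub_mul_conjTranspose_mul_mul_le {G : Matrix (Fin n) (Fin n) ℂ}
    (hG : G.IsHermitian) {d : ℝ} (hd : 0 ≤ d) (hGd : G * G ≤ d ^ 2 • 1)
    {X Y : Matrix (Fin n) (Fin k) ℂ} (hX : Xᴴ * X = 1) (hY : Yᴴ * Y = 1)
    (hGY : Commute G (Y * Yᴴ)) :
    frobNorm ((1 - X * Xᴴ) * G * X) ≤ 2 * d * sinThetaF X Y := by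
  have hGd' : Gᴴ * G ≤ d ^ 2 • 1 := by rwa [hG.eq]
  have hGd'' : G * Gᴴ ≤ d ^ 2 • 1 := by rwa [hG.eq]
  set Q := Y * Yᴴ
  have hsplit : (1 - X * Xᴴ) * G * X
      = (1 - X * Xᴴ) * Q * G * X + (1 - X * Xᴴ) * G * ((1 - Q) * X) := by
    rw [Matrix.mul_assoc _ Q G, ← hGY.eq, Matrix.sub_mul 1 Q X, Matrix.one_mul,
      Matrix.mul_sub ((1 - X * Xᴴ) * G) X (Q * X)]
    simp only [Matrix.mul_assoc]
    abel
  have hfirst : frobNorm ((1 - X * Xᴴ) * Q * G * X) ≤ sinThetaF X Y * d :=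
    calc frobNorm ((1 - X * Xᴴ) * Q * G * X)
        ≤ frobNorm ((1 - X * Xᴴ) * Q * G) := frobNorm_mul_le_of_orthonormal hX _
      _ ≤ frobNorm ((1 - X * Xᴴ) * Q) * d := frobNorm_mul_le_of_mul_conjTranspose_self_le hd _ hGd''
      _ = sinThetaF X Y * d := by
          rw [← Matrix.mul_assoc, frobNorm_mul_conjTranspose_of_orthonormal hY,
            frobNorm_one_sub_mul_conjTranspose_mul hX hY]
  have hsecond : frobNorm ((1 - X * Xᴴ) * G * ((1 - Q) * X)) ≤ d * sinThetaF X Y :=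
    calc frobNorm ((1 - X * Xᴴ) * G * ((1 - Q) * X))
        ≤ frobNorm (G * ((1 - Q) * X)) := by
          rw [Matrix.mul_assoc]
          exact frobNorm_one_sub_mul_conjTranspose_mul_le hX _
      _ ≤ d * frobNorm ((1 - Q) * X) := frobNorm_mul_le_of_conjTranspose_mul_self_le hd hGd' _
      _ = d * sinThetaF X Y := by
          rw [frobNorm_one_sub_mul_conjTranspose_mul hY hX, sinThetaF_comm hY hX]
  calc frobNorm ((1 - X * Xᴴ) * G * X)
      ≤ frobNorm ((1 - X * Xᴴ) * Q * G * X) + frobNorm ((1 - X * Xᴴ) * G * ((1 - Q) * X)) :=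
        hsplit ▸ frobNorm_add_le _ _
    _ ≤ 2 * d * sinThetaF X Y := by linarith

end CanonicalAngles

theorem residual_le_spread_mul_sinTheta {n k : ℕ} (hn : 0 < n)
    {H : Matrix (Fin n) (Fin n) ℂ} (hH : H.IsHermitian)
    (Pstar P : Matrix (Fin n) (Fin k) ℂ)
    (hPstar : Pstarᴴ * Pstar = 1) (hP : Pᴴ * P = 1)
    (hinv : ∃ M : Matrix (Fin k) (Fin k) ℂ, H * Pstar = Pstar * M) :
    frobNorm (H * P - P * (Pᴴ * H * P)) ≤
      (eigsDesc hH ⟨0, hn⟩ - eigsDesc hH ⟨n - 1, by omega⟩) * sinThetaF P Pstar := by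
  obtain ⟨M, hM⟩ := hinv
  set hi := eigsDesc hH ⟨0, hn⟩
  set lo := eigsDesc hH ⟨n - 1, by omega⟩
  have hlo : ∀ i, lo ≤ hH.eigenvalues i := sortedDesc_last_le hn _
  have hhi : ∀ i, hH.eigenvalues i ≤ hi := le_sortedDesc_zero hn _
  have hd : 0 ≤ (hi - lo) / 2 := by linarith [hlo ⟨0, hn⟩, hhi ⟨0, hn⟩]
  have hμ : IsHermitian (((hi + lo) / 2) • (1 : Matrix (Fin n) (Fin n) ℂ)) :=
    isHermitian_one.smul (IsSelfAdjoint.all _)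
  have hGQ : Commute (H - ((hi + lo) / 2) • 1) (Pstar * Pstarᴴ) :=
    (hH.commute_mul_conjTranspose_of_mul_eq hPstar hM).sub_left ((Commute.one_left _).smul_left _)
  calc frobNorm (H * P - P * (Pᴴ * H * P))
      = frobNorm ((1 - P * Pᴴ) * (H - ((hi + lo) / 2) • 1) * P) := by
        rw [mul_sub_mul_conjTranspose_mul_mul_eq hP]
    _ ≤ 2 * ((hi - lo) / 2) * sinThetaF P Pstar :=
        frobNorm_one_sub_mul_conjTranspose_mul_mul_le (hH.sub hμ) hd
          (hH.sub_smul_one_mul_self_le hlo hhi) hP hPstar hGQ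
    _ = (hi - lo) * sinThetaF P Pstar := by ring
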